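/- Let δ, δ' ∈ [0,1] and β ∈ [0,1/4] satisfy (√(δδ') + √((1−δ)(1−δ')))² ≥ 1 − βδ. Then δ' ≥ (1 − √β)² · δ. -/

import Mathlib

open Matrix ComplexOrder

variable {n : Type*} [Fintype n] [DecidableEq n]

/-- The positive semidefinite square root of a positive semidefinite matrix
(the definition Mathlib had as `Matrix.PosSemidef.sqrt`, since removed). -/
noncomputable def Matrix.PosSemidef.sqrt {𝕜 : Type*} [RCLike 𝕜] {A : Matrix n n 𝕜}
    (hA : A.PosSemidef) : Matrix n n 𝕜 :=
  hA.1.eigenvectorUnitary.1 * diagonal ((↑) ∘ (√·) ∘ hA.1.eigenvalues) *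
  (star hA.1.eigenvectorUnitary : Matrix n n 𝕜)

/-- The trace norm `‖M‖₁ = Tr √(Mᴴ M)` of a matrix. -/
noncomputable def traceNorm (M : Matrix n n ℂ) : ℝ :=
  ((Matrix.posSemidef_conjTranspose_mul_self M).sqrt.trace).re

/-- Positive semidefinite square root (junk value `0` off the PSD matrices). -/
noncomputable def msqrt (A : Matrix n n ℂ) : Matrix n n ℂ :=
  @dite _ A.PosSemidef (Classical.propDecidable _) (fun h => h.sqrt) (fun _ => 0)

/-- Fidelity `F(ρ,σ) = ‖√ρ √σ‖₁²`. -/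
noncomputable def fidelity (ρ σ : Matrix n n ℂ) : ℝ :=
  (traceNorm (msqrt ρ * msqrt σ)) ^ 2

/-- A density operator: positive semidefinite with unit trace. -/
def IsDensity (ρ : Matrix n n ℂ) : Prop := ρ.PosSemidef ∧ ρ.trace = 1

/-- The Löwner partial order `A ⪯ B`. -/
def Loewner (A B : Matrix n n ℂ) : Prop := (B - A).PosSemidef

/-- `supp ρ ⊆ supp σ`, expressed for PSD matrices as `ker σ ⊆ ker ρ`. -/
def SuppSubset (ρ σ : Matrix n n ℂ) : Prop := ∀ v, σ *ᵥ v = 0 → ρ *ᵥ v = 0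

/-- Observational divergence `D(ρ‖σ)`. -/
noncomputable def obsDiv (ρ σ : Matrix n n ℂ) : ℝ :=
  sSup { x | ∃ M : Matrix n n ℂ, M.PosSemidef ∧ (1 - M).PosSemidef ∧
    (M * σ).trace ≠ 0 ∧
    x = ((M * ρ).trace).re * Real.logb 2 (((M * ρ).trace).re / ((M * σ).trace).re) }

private lemma aux_sq_le (a b : ℝ) (hb : 0 ≤ b) (h : a ^ 2 ≤ b ^ 2) : a ≤ b := by
  nlinarith [sq_nonneg (a - b), sq_nonneg (a + b)]

private lemma aux_main (x y c d t : ℝ) (hx0 : 0 ≤ x) (hy0 : 0 ≤ y) (ht0 : 0 ≤ t)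
    (key2 : (x * d) ^ 2 ≤ (c * y + t * x) ^ 2)
    (hxd2 : (x * d) ^ 2 = x ^ 2 * (1 - y ^ 2))
    (hcy2 : (c * y) ^ 2 = (1 - x ^ 2) * y ^ 2)
    (hcross : c * y * (t * x) ≤ y * (t * x)) :
    x ^ 2 * (1 - t ^ 2) ≤ y ^ 2 + 2 * t * x * y := by
  nlinarith [key2, hxd2, hcy2, hcross]

private lemma aux_lin (x y t : ℝ) (hx0 : 0 ≤ x) (hy0 : 0 ≤ y) (ht0 : 0 ≤ t)
    (ht1 : t ≤ 1 / 2) (h : x ^ 2 * (1 - t ^ 2) ≤ y ^ 2 + 2 * t * x * y) :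
    (1 - t) * x ≤ y := by
  by_contra hcon
  push_neg at hcon
  have h1 : 0 < (1 - t) * x - y := by linarith
  have h2 : 0 < x := by nlinarith
  nlinarith [mul_nonneg hy0 h1.le, mul_pos (by nlinarith : (0:ℝ) < (1 + t) * x) h1]

theorem stmt4 (δ δ' β : ℝ) (hδ : δ ∈ Set.Icc (0:ℝ) 1) (hδ' : δ' ∈ Set.Icc (0:ℝ) 1)
    (hβ : β ∈ Set.Icc (0:ℝ) (1/4))
    (h : (Real.sqrt (δ * δ') + Real.sqrt ((1 - δ) * (1 - δ')))^2 ≥ 1 - β * δ) :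
    δ' ≥ (1 - Real.sqrt β)^2 * δ := by
  obtain ⟨hδ0, hδ1⟩ := hδ
  obtain ⟨hδ'0, hδ'1⟩ := hδ'
  obtain ⟨hβ0, hβ1⟩ := hβ
  set x := Real.sqrt δ with hxdef
  set y := Real.sqrt δ' with hydef
  set c := Real.sqrt (1 - δ) with hcdef
  set d := Real.sqrt (1 - δ') with hddef
  set t := Real.sqrt β with htdef
  have hx : x ^ 2 = δ := Real.sq_sqrt hδ0
  have hy : y ^ 2 = δ' := Real.sq_sqrt hδ'0
  have hc : c ^ 2 = 1 - δ := Real.sq_sqrt (by linarith)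
  have hd : d ^ 2 = 1 - δ' := Real.sq_sqrt (by linarith)
  have ht : t ^ 2 = β := Real.sq_sqrt hβ0
  have hx0 : 0 ≤ x := Real.sqrt_nonneg _
  have hy0 : 0 ≤ y := Real.sqrt_nonneg _
  have hc0 : 0 ≤ c := Real.sqrt_nonneg _
  have hd0 : 0 ≤ d := Real.sqrt_nonneg _
  have ht0 : 0 ≤ t := Real.sqrt_nonneg _
  have hc1 : c ≤ 1 := Real.sqrt_le_one.mpr (by linarith)
  have ht1 : t ≤ 1 / 2 := by
    have h1 : t ≤ Real.sqrt (1 / 4) := Real.sqrt_le_sqrt hβ1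
    rwa [show (1/4:ℝ) = (1/2)^2 by norm_num,
      Real.sqrt_sq (by norm_num : (0:ℝ) ≤ 1/2)] at h1
  have hm1 : Real.sqrt (δ * δ') = x * y := Real.sqrt_mul hδ0 _
  have hm2 : Real.sqrt ((1 - δ) * (1 - δ')) = c * d := Real.sqrt_mul (by linarith) _
  rw [hm1, hm2] at h
  have hid : (x * y + c * d) ^ 2 + (x * d - c * y) ^ 2 = (x ^ 2 + c ^ 2) * (y ^ 2 + d ^ 2) := by
    ring
  rw [hx, hy, hc, hd] at hid
  have htx2 : (t * x) ^ 2 = β * δ := by rw [mul_pow, ht, hx]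
  have hsq : (x * d - c * y) ^ 2 ≤ (t * x) ^ 2 := by rw [htx2]; linarith
  have key : x * d - c * y ≤ t * x := aux_sq_le _ _ (mul_nonneg ht0 hx0) hsq
  have key' : x * d ≤ c * y + t * x := by linarith
  have key2 : (x * d) ^ 2 ≤ (c * y + t * x) ^ 2 :=
    pow_le_pow_left₀ (mul_nonneg hx0 hd0) key' 2
  have hxd2 : (x * d) ^ 2 = x ^ 2 * (1 - y ^ 2) := by rw [mul_pow, hd, ← hy]
  have hcy2 : (c * y) ^ 2 = (1 - x ^ 2) * y ^ 2 := by rw [mul_pow, hc, ← hx]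
  have hcy1 : c * y ≤ y := by
    calc c * y ≤ 1 * y := mul_le_mul_of_nonneg_right hc1 hy0
    _ = y := one_mul y
  have hcross : c * y * (t * x) ≤ y * (t * x) :=
    mul_le_mul_of_nonneg_right hcy1 (mul_nonneg ht0 hx0)
  have main : x ^ 2 * (1 - t ^ 2) ≤ y ^ 2 + 2 * t * x * y :=
    aux_main x y c d t hx0 hy0 ht0 key2 hxd2 hcy2 hcross
  have hlin : (1 - t) * x ≤ y := aux_lin x y t hx0 hy0 ht0 ht1 main
  have hfin : ((1 - t) * x) ^ 2 ≤ y ^ 2 :=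
    pow_le_pow_left₀ (mul_nonneg (by linarith) hx0) hlin 2
  have heq : ((1 - t) * x) ^ 2 = (1 - t) ^ 2 * δ := by rw [mul_pow, hx]
  rw [heq, hy] at hfin
  linarith
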